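/- Let B > 0, L > 0, m > 0, n > 0, h̄ > 0, and k be a positive integer. Define the growth rate λ = −h̄^n (kπ/L)² [B(kπ/L)⁴ + (kπ/L)² − h̄^{−(m+1)}]. Then λ > 0 if and only if h̄ < h_c, where h_c = [B(kπ/L)⁴ + (kπ/L)²]^{−1/(m+1)}. -/
import Mathlib

theorem stmt7 (B L m n hbar : ℝ) (hB : 0 < B) (hL : 0 < L) (hm : 0 < m)
    (hn : 0 < n) (hh : 0 < hbar) (k : ℕ) (hk : 0 < k)
    (q lam hc : ℝ) (hq : q = k * Real.pi / L)
    (hlam : lam = -hbar ^ n * q ^ 2 * (B * q ^ 4 + q ^ 2 - hbar ^ (-(m + 1))))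
    (hhc : hc = (B * q ^ 4 + q ^ 2) ^ (-(1 / (m + 1)))) :
    0 < lam ↔ hbar < hc := by
  have hqpos : 0 < q := by
    rw [hq]
    positivity
  have hA : 0 < B * q ^ 4 + q ^ 2 := by positivity
  have hm1 : 0 < m + 1 := by linarith
  have hcoef : 0 < hbar ^ n * q ^ 2 := by positivity
  have h1 : 0 < lam ↔ B * q ^ 4 + q ^ 2 < hbar ^ (-(m + 1)) := by
    rw [hlam]
    constructor
    · intro h
      by_contra hcon
      push_neg at hcon
      nlinarith
    · intro h
      nlinarith
  rw [h1, hhc]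
  rw [Real.rpow_neg hh.le, Real.rpow_neg hA.le, ← Real.inv_rpow hA.le, one_div,
    lt_inv_comm₀ hA (Real.rpow_pos_of_pos hh _),
    Real.lt_rpow_inv_iff_of_pos hh.le (by positivity) hm1]
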